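/- arXiv:math/0512398 — 4 statements merged into one kernel-verified Lean document; each statement's English description precedes it below -/
import Mathlib

section
/- For f, g in a Hilbert space H, viewing H as the one-particle subspace of the symmetric Fock space Γ(H), the refined estimate ‖ε(f) − ε(g) − (f − g)‖ ≤ ‖f − g‖ (‖f‖ + ‖g‖) exp(½(‖f‖ + ‖g‖)²) holds. -/
/-!
Write `ψ = ε - ι`, so that `ε f - ε g - ι (f - g) = ψ f - ψ g` and
`⟪ψ u, ψ v⟫ = exp ⟪u, v⟫ - ⟪u, v⟫`. Expanding the exponential, `‖ψ f - ψ g‖²` is the series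
`∑_{n ≥ 2} ‖f^{⊗n} - g^{⊗n}‖² / n!`, and telescoping
`f^{⊗(n+1)} - g^{⊗(n+1)} = f^{⊗n} ⊗ (f - g) + (f^{⊗n} - g^{⊗n}) ⊗ g` gives
`‖f^{⊗(n+1)} - g^{⊗(n+1)}‖ ≤ ‖f - g‖ (‖f‖ + ‖g‖)^n`. Comparing with the series of
`exp ((‖f‖ + ‖g‖)²)` and taking square roots gives the estimate.
-/

open scoped InnerProductSpace Nat TensorProduct

universe u

section TensorPower

variable {𝕜 : Type*} [RCLike 𝕜] {H : Type u} [NormedAddCommGroup H] [InnerProductSpace 𝕜 H]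

theorem exists_tensorPower_norm_sub_le (f g : H) (n : ℕ) :
    ∃ (E : Type u) (_ : NormedAddCommGroup E) (_ : InnerProductSpace 𝕜 E) (F G : E),
      ‖F‖ = ‖f‖ ^ (n + 1) ∧ ‖G‖ = ‖g‖ ^ (n + 1) ∧ ⟪F, G⟫_𝕜 = ⟪f, g⟫_𝕜 ^ (n + 1) ∧
        ‖F - G‖ ≤ ‖f - g‖ * (‖f‖ + ‖g‖) ^ n := by
  induction n with
  | zero => exact ⟨H, inferInstance, inferInstance, f, g, by simp, by simp, by simp, by simp⟩
  | succ n ih =>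
    obtain ⟨E, _, _, F, G, hF, hG, hFG, hdist⟩ := ih
    refine ⟨E ⊗[𝕜] H, inferInstance, inferInstance, F ⊗ₜ f, G ⊗ₜ g, by simp [hF, pow_succ],
      by simp [hG, pow_succ], by simp [hFG, pow_succ], ?_⟩
    have hfn : ‖f‖ ^ n ≤ (‖f‖ + ‖g‖) ^ n := by gcongr; simp
    calc ‖F ⊗ₜ[𝕜] f - G ⊗ₜ g‖ = ‖F ⊗ₜ[𝕜] (f - g) + (F - G) ⊗ₜ g‖ := by
          rw [TensorProduct.tmul_sub, TensorProduct.sub_tmul, sub_add_sub_cancel]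
      _ ≤ ‖F‖ * ‖f - g‖ + ‖F - G‖ * ‖g‖ := by grw [norm_add_le]; simp
      _ ≤ ‖f‖ * (‖f‖ + ‖g‖) ^ n * ‖f - g‖ + ‖f - g‖ * (‖f‖ + ‖g‖) ^ n * ‖g‖ := by
          rw [hF, pow_succ']; grw [hfn, hdist]
      _ = ‖f - g‖ * (‖f‖ + ‖g‖) ^ (n + 1) := by ring

theorem norm_pow_sub_two_re_inner_pow_add_norm_pow_le (f g : H) (n : ℕ) :
    ‖f‖ ^ (2 * (n + 1)) - 2 * RCLike.re (⟪f, g⟫_𝕜 ^ (n + 1)) + ‖g‖ ^ (2 * (n + 1)) ≤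
      (‖f - g‖ * (‖f‖ + ‖g‖) ^ n) ^ 2 := by
  obtain ⟨E, _, _, F, G, hF, hG, hFG, hdist⟩ := exists_tensorPower_norm_sub_le (𝕜 := 𝕜) f g n
  rw [mul_comm 2, pow_mul, pow_mul, ← hF, ← hG, ← hFG, ← norm_sub_sq]
  gcongr

end TensorPower

section ExpKernel

variable {H F : Type*} [NormedAddCommGroup H] [InnerProductSpace ℂ H]
  [NormedAddCommGroup F] [InnerProductSpace ℂ F]

theorem Complex.hasSum_pow_add_two_div_factorial (x : ℂ) :
    HasSum (fun n : ℕ => x ^ (n + 2) / (n + 2)!) (Complex.exp x - 1 - x) := by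
  have h := (hasSum_nat_add_iff' 2).mpr (NormedSpace.expSeries_div_hasSum_exp x)
  simpa [← Complex.exp_eq_exp_ℂ, Finset.sum_range_succ, sub_sub] using h

theorem hasSum_inner_self_sub_of_inner_eq_exp_sub {ψ : H → F}
    (hψ : ∀ u v, ⟪ψ u, ψ v⟫_ℂ = Complex.exp ⟪u, v⟫_ℂ - ⟪u, v⟫_ℂ) (f g : H) :
    HasSum (fun n : ℕ =>
        (⟪f, f⟫_ℂ ^ (n + 2) - ⟪f, g⟫_ℂ ^ (n + 2) - ⟪g, f⟫_ℂ ^ (n + 2) + ⟪g, g⟫_ℂ ^ (n + 2)) /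
          (n + 2)!)
      ⟪ψ f - ψ g, ψ f - ψ g⟫_ℂ := by
  have h := (((Complex.hasSum_pow_add_two_div_factorial ⟪f, f⟫_ℂ).sub
    (Complex.hasSum_pow_add_two_div_factorial ⟪f, g⟫_ℂ)).sub
    (Complex.hasSum_pow_add_two_div_factorial ⟪g, f⟫_ℂ)).add
    (Complex.hasSum_pow_add_two_div_factorial ⟪g, g⟫_ℂ)
  have hsum : ⟪ψ f - ψ g, ψ f - ψ g⟫_ℂ = Complex.exp ⟪f, f⟫_ℂ - 1 - ⟪f, f⟫_ℂ -
      (Complex.exp ⟪f, g⟫_ℂ - 1 - ⟪f, g⟫_ℂ) - (Complex.exp ⟪g, f⟫_ℂ - 1 - ⟪g, f⟫_ℂ) +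
      (Complex.exp ⟪g, g⟫_ℂ - 1 - ⟪g, g⟫_ℂ) := by
    simp only [inner_sub_left, inner_sub_right, hψ]; ring
  rw [hsum]
  simpa only [add_div, sub_div] using h

theorem hasSum_norm_sub_sq_of_inner_eq_exp_sub {ψ : H → F}
    (hψ : ∀ u v, ⟪ψ u, ψ v⟫_ℂ = Complex.exp ⟪u, v⟫_ℂ - ⟪u, v⟫_ℂ) (f g : H) :
    HasSum (fun n : ℕ =>
        (‖f‖ ^ (2 * (n + 2)) - 2 * (⟪f, g⟫_ℂ ^ (n + 2)).re + ‖g‖ ^ (2 * (n + 2))) / (n + 2)!)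
      (‖ψ f - ψ g‖ ^ 2) := by
  rw [← Complex.hasSum_ofReal]
  convert hasSum_inner_self_sub_of_inner_eq_exp_sub hψ f g using 1
  · funext n
    rw [← inner_conj_symm g f, ← map_pow, inner_self_eq_norm_sq_to_K f,
      inner_self_eq_norm_sq_to_K g, RCLike.ofReal_eq_complex_ofReal]
    push_cast
    rw [Complex.re_eq_add_conj]
    ring
  · rw [inner_self_eq_norm_sq_to_K, RCLike.ofReal_eq_complex_ofReal]; push_cast; rfl

theorem norm_sub_sq_le_of_inner_eq_exp_sub {ψ : H → F}
    (hψ : ∀ u v, ⟪ψ u, ψ v⟫_ℂ = Complex.exp ⟪u, v⟫_ℂ - ⟪u, v⟫_ℂ) (f g : H) :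
    ‖ψ f - ψ g‖ ^ 2 ≤ (‖f - g‖ * (‖f‖ + ‖g‖)) ^ 2 * Real.exp ((‖f‖ + ‖g‖) ^ 2) := by
  set K := ‖f‖ + ‖g‖
  have hexp : HasSum (fun n : ℕ => (‖f - g‖ * K) ^ 2 * ((K ^ 2) ^ n / n !))
      ((‖f - g‖ * K) ^ 2 * Real.exp (K ^ 2)) := by
    rw [Real.exp_eq_exp_ℝ]
    exact (NormedSpace.expSeries_div_hasSum_exp (K ^ 2)).mul_left _
  refine hasSum_le (fun n => ?_) (hasSum_norm_sub_sq_of_inner_eq_exp_sub hψ f g) hexp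
  calc _ ≤ (‖f - g‖ * K ^ (n + 1)) ^ 2 / (n + 2)! := by
        gcongr
        simpa using norm_pow_sub_two_re_inner_pow_add_norm_pow_le (𝕜 := ℂ) f g (n + 1)
    _ ≤ (‖f - g‖ * K ^ (n + 1)) ^ 2 / n ! := by
        gcongr
        omega
    _ = _ := by rw [← pow_mul]; ring

end ExpKernel

/-- with `ι : H → Γ(H)` the embedding of the one-particle subspace
(characterised by `⟨ι f, ι g⟩ = ⟨f,g⟩` and `⟨ε f, ι g⟩ = ⟨f,g⟩ = ⟨ι f, ε g⟩`, since the
one-particle component of `ε f` is `f`), the refined estimate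
`‖ε f − ε g − (f − g)‖ ≤ ‖f − g‖(‖f‖ + ‖g‖) exp(½(‖f‖ + ‖g‖)²)` holds. -/
theorem exponential_vectors_refined_estimate {H F : Type*}
    [NormedAddCommGroup H] [InnerProductSpace ℂ H]
    [NormedAddCommGroup F] [InnerProductSpace ℂ F]
    (ε : H → F) (ι : H →ₗ[ℂ] F)
    (hε : ∀ f g : H, ⟪ε f, ε g⟫_ℂ = Complex.exp ⟪f, g⟫_ℂ)
    (hι : ∀ f g : H, ⟪ι f, ι g⟫_ℂ = ⟪f, g⟫_ℂ)
    (hει : ∀ f g : H, ⟪ε f, ι g⟫_ℂ = ⟪f, g⟫_ℂ)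
    (hιε : ∀ f g : H, ⟪ι f, ε g⟫_ℂ = ⟪f, g⟫_ℂ) :
    ∀ f g : H, ‖ε f - ε g - ι (f - g)‖ ≤
      ‖f - g‖ * (‖f‖ + ‖g‖) * Real.exp ((1 / 2) * (‖f‖ + ‖g‖) ^ 2) := by
  intro f g
  have hψ : ∀ u v, ⟪ε u - ι u, ε v - ι v⟫_ℂ = Complex.exp ⟪u, v⟫_ℂ - ⟪u, v⟫_ℂ := by
    intro u v
    simp only [inner_sub_left, inner_sub_right, hε, hι, hει, hιε]
    ring
  have hw : ε f - ε g - ι (f - g) = (ε f - ι f) - (ε g - ι g) := by rw [map_sub]; abel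
  have hexp : Real.exp ((1 / 2) * (‖f‖ + ‖g‖) ^ 2) ^ 2 = Real.exp ((‖f‖ + ‖g‖) ^ 2) := by
    rw [← Real.exp_nat_mul]; ring_nf
  rw [hw, ← pow_le_pow_iff_left₀ (norm_nonneg _) (by positivity) two_ne_zero, mul_pow, hexp]
  exact norm_sub_sq_le_of_inner_eq_exp_sub hψ f g
end

section
/- Let F = [[K, M],[L, C−I]] on h ⊕ (h⊗k) satisfy the form inequality 2 Re⟨ξ, Fξ⟩ + ‖ΔFξ‖² ≤ 0 on D₀ ⊕ (D ⊗_alg D_k). Then D₀ ⊂ Dom M*, and for all u ∈ D₀: ‖(L + CM*)u‖² + ‖M*u‖² + 2 Re⟨u, Ku⟩ ≤ 0. In particular M* is K-bounded with relative bound 0: for every λ > 0, ‖M*u‖ ≤ λ‖Ku‖ + λ^{-1}‖u‖. -/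
/-!
Expanding the square turns the form inequality into
`2 Re⟨u, Ku⟩ + 2 Re⟨u, Mη⟩ + ‖Lu + Cη‖² ≤ ‖η‖²`. Taking `u = 0` shows that `C` is a contraction,
so it extends to `C̄`; dropping `‖Lu + Cη‖²` and scaling `η` bounds `|⟨u, Mη⟩|` by a multiple of
`‖η‖`, so `u ∈ Dom M*`. With `w = M*u` the inequality reads
`2 Re⟨u, Ku⟩ + 2 Re⟨w, η⟩ + ‖Lu + C̄η‖² - ‖η‖² ≤ 0`, which by continuity holds for all `η`;
at `η = w` it is the claimed bound, and AM-GM then gives the relative bound.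
-/

open scoped InnerProductSpace
open RCLike ComplexConjugate

section InnerProductSpace

variable {𝕜 E : Type*} [RCLike 𝕜] [NormedAddCommGroup E] [InnerProductSpace 𝕜 E]

theorem two_mul_re_inner_sub_add_norm_sub_sq (x y : E) :
    2 * re ⟪x, y - x⟫_𝕜 + ‖y - x‖ ^ 2 = ‖y‖ ^ 2 - ‖x‖ ^ 2 := by
  have h := norm_add_sq (𝕜 := 𝕜) x (y - x)
  rw [add_sub_cancel] at h
  linarith

theorem add_norm_sq_le_zero_of_dense {f : E → ℝ} (hf : Continuous f) {D : Set E} (hD : Dense D)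
    (w : E) (h : ∀ η ∈ D, f η + 2 * re ⟪w, η⟫_𝕜 - ‖η‖ ^ 2 ≤ 0) :
    f w + ‖w‖ ^ 2 ≤ 0 := by
  have hw := hD.induction (P := fun η ↦ f η + 2 * re ⟪w, η⟫_𝕜 - ‖η‖ ^ 2 ≤ 0) h
    (isClosed_le (by fun_prop) continuous_const) w
  rw [inner_self_eq_norm_sq] at hw
  linarith

end InnerProductSpace

theorem norm_le_sqrt_mul_norm_of_two_re_le {𝕜 E : Type*} [RCLike 𝕜] [SeminormedAddCommGroup E]
    [NormedSpace 𝕜 E] (φ : E →ₗ[𝕜] 𝕜) {B : ℝ} (hφ : ∀ x, 2 * re (φ x) ≤ B + ‖x‖ ^ 2) (x : E) :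
    ‖φ x‖ ≤ √B * ‖x‖ := by
  have hB : 0 ≤ B := by simpa using hφ 0
  -- `hφ` at `(t * conj (φ x)) • x` is a quadratic inequality in the real `t`.
  have hquad : ∀ t : ℝ, 0 ≤ (‖φ x‖ ^ 2 * ‖x‖ ^ 2) * (t * t) + (-2 * ‖φ x‖ ^ 2) * t + B := by
    intro t
    have ht := hφ (((t : 𝕜) * conj (φ x)) • x)
    rw [map_smul, smul_eq_mul, mul_assoc, RCLike.conj_mul, ← ofReal_pow, ← ofReal_mul, ofReal_re,
      norm_smul, norm_mul, norm_ofReal, norm_conj, mul_pow, mul_pow, sq_abs] at ht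
    linarith
  have hdisc := discrim_le_zero hquad
  rw [discrim] at hdisc
  have hsq : ‖φ x‖ ^ 2 ≤ B * ‖x‖ ^ 2 := by
    nlinarith [mul_nonneg hB (sq_nonneg ‖x‖), sq_nonneg ‖φ x‖]
  rw [← Real.sqrt_sq (norm_nonneg x), ← Real.sqrt_mul hB]
  exact (Real.le_sqrt (norm_nonneg _) (by positivity)).2 hsq

theorem LinearPMap.mem_adjoint_domain_of_two_re_inner_le {𝕜 E F : Type*} [RCLike 𝕜]
    [NormedAddCommGroup E] [InnerProductSpace 𝕜 E] [CompleteSpace E]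
    [NormedAddCommGroup F] [InnerProductSpace 𝕜 F]
    (T : E →ₗ.[𝕜] F) {y : F} {B : ℝ} (h : ∀ x : T.domain, 2 * re ⟪y, T x⟫_𝕜 ≤ B + ‖x‖ ^ 2) :
    y ∈ T.adjoint.domain := by
  rw [T.mem_adjoint_domain_iff]
  exact AddMonoidHomClass.continuous_of_bound _ √B
    (norm_le_sqrt_mul_norm_of_two_re_le ((innerₛₗ 𝕜 y).comp T.toFun) h)

theorem le_mul_add_inv_mul_of_sq_le {a b w lam : ℝ} (ha : 0 ≤ a) (hb : 0 ≤ b) (hlam : 0 < lam)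
    (hw : w ^ 2 ≤ 2 * a * b) : w ≤ lam * a + lam⁻¹ * b := by
  have hinv : lam * lam⁻¹ = 1 := mul_inv_cancel₀ hlam.ne'
  refine le_of_pow_le_pow_left₀ two_ne_zero (by positivity) ?_
  nlinarith [sq_nonneg (lam * a - lam⁻¹ * b)]

theorem le_mul_add_inv_mul_of_sq_add_two_re_inner_le {𝕜 E : Type*} [RCLike 𝕜]
    [NormedAddCommGroup E] [InnerProductSpace 𝕜 E] {w lam : ℝ} {u k : E}
    (hw : w ^ 2 + 2 * re ⟪u, k⟫_𝕜 ≤ 0) (hlam : 0 < lam) : w ≤ lam * ‖k‖ + lam⁻¹ * ‖u‖ := by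
  have hre := re_inner_le_norm (𝕜 := 𝕜) (-u) k
  rw [inner_neg_left, map_neg, norm_neg] at hre
  exact le_mul_add_inv_mul_of_sq_le (norm_nonneg _) (norm_nonneg _) hlam (by linarith)

theorem block_form_inequality_adjoint_bound_general {h K2 : Type*}
    [NormedAddCommGroup h] [InnerProductSpace ℂ h]
    [NormedAddCommGroup K2] [InnerProductSpace ℂ K2] [CompleteSpace K2]
    (D0 : Submodule ℂ h) (Dm : Submodule ℂ K2)
    (hDm : Dense (Dm : Set K2))
    (K : D0 →ₗ[ℂ] h) (L : D0 →ₗ[ℂ] K2) (M : Dm →ₗ[ℂ] h) (C : Dm →ₗ[ℂ] K2)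
    (hform : ∀ (u : D0) (η : Dm),
      2 * (⟪(u : h), K u + M η⟫_ℂ + ⟪(η : K2), L u + C η - (η : K2)⟫_ℂ).re
        + ‖L u + C η - (η : K2)‖ ^ 2 ≤ 0) :
    (∀ u : D0, (u : h) ∈ (LinearPMap.adjoint (⟨Dm, M⟩ : K2 →ₗ.[ℂ] h)).domain) ∧
      ∃ Cbar : K2 →L[ℂ] K2, ‖Cbar‖ ≤ 1 ∧ (∀ η : Dm, Cbar (η : K2) = C η) ∧
        ∀ (u : D0) (hu : (u : h) ∈ (LinearPMap.adjoint (⟨Dm, M⟩ : K2 →ₗ.[ℂ] h)).domain),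
          ‖L u + Cbar (LinearPMap.adjoint (⟨Dm, M⟩ : K2 →ₗ.[ℂ] h) ⟨(u : h), hu⟩)‖ ^ 2
              + ‖LinearPMap.adjoint (⟨Dm, M⟩ : K2 →ₗ.[ℂ] h) ⟨(u : h), hu⟩‖ ^ 2
              + 2 * (⟪(u : h), K u⟫_ℂ).re ≤ 0 ∧
            ∀ lam : ℝ, 0 < lam →
              ‖LinearPMap.adjoint (⟨Dm, M⟩ : K2 →ₗ.[ℂ] h) ⟨(u : h), hu⟩‖ ≤
                lam * ‖K u‖ + lam⁻¹ * ‖(u : h)‖ := by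
  set T : K2 →ₗ.[ℂ] h := ⟨Dm, M⟩
  have hreduced : ∀ (u : D0) (η : Dm), 2 * (⟪(u : h), K u⟫_ℂ).re + 2 * (⟪(u : h), M η⟫_ℂ).re
      + ‖L u + C η‖ ^ 2 - ‖(η : K2)‖ ^ 2 ≤ 0 := fun u η ↦ by
    have hη := two_mul_re_inner_sub_add_norm_sub_sq (𝕜 := ℂ) (η : K2) (L u + C η)
    have huη := hform u η
    rw [Complex.add_re, inner_add_right, Complex.add_re] at huη
    simp only [RCLike.re_to_complex] at hη
    linarith
  have hC : ∀ η : Dm, ‖C η‖ ≤ 1 * ‖(η : K2)‖ := fun η ↦ by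
    refine le_of_pow_le_pow_left₀ two_ne_zero (by positivity) ?_
    simpa using hreduced 0 η
  have hmem : ∀ u : D0, (u : h) ∈ T.adjoint.domain := fun u ↦
    T.mem_adjoint_domain_of_two_re_inner_le (B := -2 * (⟪(u : h), K u⟫_ℂ).re) fun η ↦ by
      change 2 * (⟪(u : h), M η⟫_ℂ).re ≤ _ + ‖(η : K2)‖ ^ 2
      linarith [hreduced u η, sq_nonneg ‖L u + C η‖]
  have hdense : DenseRange Dm.subtype := hDm.denseRange_val
  refine ⟨hmem, C.extendOfNorm Dm.subtype, LinearMap.opNorm_extendOfNorm_le hdense zero_le_one hC,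
    LinearMap.extendOfNorm_eq hdense ⟨1, hC⟩, fun u hu ↦ ?_⟩
  set Cbar := C.extendOfNorm Dm.subtype
  set w := T.adjoint ⟨u, hu⟩
  have hbound : ‖L u + Cbar w‖ ^ 2 + ‖w‖ ^ 2 + 2 * (⟪(u : h), K u⟫_ℂ).re ≤ 0 := by
    have hw := add_norm_sq_le_zero_of_dense (𝕜 := ℂ)
      (f := fun x ↦ 2 * (⟪(u : h), K u⟫_ℂ).re + ‖L u + Cbar x‖ ^ 2) (by fun_prop) hDm w
      fun η hη ↦ by
        have hadj : ⟪w, η⟫_ℂ = ⟪(u : h), M ⟨η, hη⟩⟫_ℂ :=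
          LinearPMap.adjoint_isFormalAdjoint (T := T) hDm ⟨u, hu⟩ ⟨η, hη⟩
        have hext : Cbar η = C ⟨η, hη⟩ := LinearMap.extendOfNorm_eq hdense ⟨1, hC⟩ ⟨η, hη⟩
        have hreduced_η := hreduced u ⟨η, hη⟩
        simp only [RCLike.re_to_complex, hadj, hext]
        linarith
    linarith
  refine ⟨hbound, fun lam hlam ↦ le_mul_add_inv_mul_of_sq_add_two_re_inner_le (𝕜 := ℂ) ?_ hlam⟩
  rw [RCLike.re_to_complex]
  linarith [sq_nonneg ‖L u + Cbar w‖]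

/-- with `F = [[K, M],[L, C−I]]` satisfying the form inequality
`2Re⟨ξ, Fξ⟩ + ‖ΔFξ‖² ≤ 0` on `D₀ ⊕ (D ⊗ D_k)`, the domain `D₀` is contained in `Dom M*`
and, writing `C̄` for the continuous (contractive) extension of `C`,
`‖(L + C̄M*)u‖² + ‖M*u‖² + 2Re⟨u, Ku⟩ ≤ 0` for all `u ∈ D₀`; in particular `M*` is
`K`-bounded with relative bound `0`: `‖M*u‖ ≤ λ‖Ku‖ + λ⁻¹‖u‖` for every `λ > 0`. -/
theorem block_form_inequality_adjoint_bound {h K2 : Type*}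
    [NormedAddCommGroup h] [InnerProductSpace ℂ h] [CompleteSpace h]
    [NormedAddCommGroup K2] [InnerProductSpace ℂ K2] [CompleteSpace K2]
    (D0 : Submodule ℂ h) (Dm : Submodule ℂ K2)
    (hD0 : Dense (D0 : Set h)) (hDm : Dense (Dm : Set K2))
    (K : D0 →ₗ[ℂ] h) (L : D0 →ₗ[ℂ] K2) (M : Dm →ₗ[ℂ] h) (C : Dm →ₗ[ℂ] K2)
    (hform : ∀ (u : D0) (η : Dm),
      2 * (⟪(u : h), K u + M η⟫_ℂ + ⟪(η : K2), L u + C η - (η : K2)⟫_ℂ).re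
        + ‖L u + C η - (η : K2)‖ ^ 2 ≤ 0) :
    (∀ u : D0, (u : h) ∈ (LinearPMap.adjoint (⟨Dm, M⟩ : K2 →ₗ.[ℂ] h)).domain) ∧
      ∃ Cbar : K2 →L[ℂ] K2, ‖Cbar‖ ≤ 1 ∧ (∀ η : Dm, Cbar (η : K2) = C η) ∧
        ∀ (u : D0) (hu : (u : h) ∈ (LinearPMap.adjoint (⟨Dm, M⟩ : K2 →ₗ.[ℂ] h)).domain),
          ‖L u + Cbar (LinearPMap.adjoint (⟨Dm, M⟩ : K2 →ₗ.[ℂ] h) ⟨(u : h), hu⟩)‖ ^ 2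
              + ‖LinearPMap.adjoint (⟨Dm, M⟩ : K2 →ₗ.[ℂ] h) ⟨(u : h), hu⟩‖ ^ 2
              + 2 * (⟪(u : h), K u⟫_ℂ).re ≤ 0 ∧
            ∀ lam : ℝ, 0 < lam →
              ‖LinearPMap.adjoint (⟨Dm, M⟩ : K2 →ₗ.[ℂ] h) ⟨(u : h), hu⟩‖ ≤
                lam * ‖K u‖ + lam⁻¹ * ‖(u : h)‖ :=
  block_form_inequality_adjoint_bound_general D0 Dm hDm K L M C hform
end

section
/- Let F = [[K, M],[L, C−I]] satisfy the form inequality and suppose additionally that equality holds: 2 Re⟨ξ, Fξ⟩ + ‖ΔFξ‖² = 0 for all ξ in the domain. Then C is isometric on its domain, ‖Lu‖² + 2 Re⟨u, Ku⟩ = 0 for all u ∈ D₀, and M* ⊃ −C*L (i.e. M*u = −C*Lu for all u ∈ D₀). -/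
/-!
Expanding the square, the form splits as
`(‖Lu‖² + 2 Re⟪u, Ku⟫) + (‖Cη‖² - ‖η‖²) + 2 Re(⟪u, Mη⟫ + ⟪Lu, Cη⟫)`.
Taking `η = 0` and `u = 0` shows that the first two brackets vanish, so the real part of the
cross term vanishes; as the cross term is `ℂ`-linear in `η`, it vanishes itself. The isometry `C`
extends by density to a contraction `C̄`, and the vanishing cross term reads
`⟪u, Mη⟫ = ⟪-C̄* Lu, η⟫`, i.e. `u ∈ Dom M*` with `M* u = -C̄* Lu`.
-/

open scoped InnerProductSpace

theorem two_mul_re_inner_add_sub_add_norm_sq {𝕜 E : Type*} [RCLike 𝕜] [NormedAddCommGroup E]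
    [InnerProductSpace 𝕜 E] (x y z : E) :
    2 * RCLike.re ⟪z, x + y - z⟫_𝕜 + ‖x + y - z‖ ^ 2
      = ‖x‖ ^ 2 + ‖y‖ ^ 2 - ‖z‖ ^ 2 + 2 * RCLike.re ⟪x, y⟫_𝕜 := by
  rw [add_sub_assoc, norm_add_sq (𝕜 := 𝕜), norm_sub_sq (𝕜 := 𝕜), inner_add_right,
    inner_sub_right, inner_sub_right]
  simp only [map_add, map_sub, inner_self_eq_norm_sq]
  rw [inner_re_symm (𝕜 := 𝕜) z x, inner_re_symm (𝕜 := 𝕜) z y]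
  ring

theorem LinearMap.eq_zero_of_forall_re_apply_eq_zero {V : Type*} [AddCommGroup V] [Module ℂ V]
    (f : V →ₗ[ℂ] ℂ) (hf : ∀ v, (f v).re = 0) : f = 0 := by
  ext v
  refine Complex.ext (hf v) ?_
  simpa [map_smul] using hf (Complex.I • v)

theorem LinearPMap.exists_adjoint_apply_eq {𝕜 E F : Type*} [RCLike 𝕜]
    [NormedAddCommGroup E] [InnerProductSpace 𝕜 E] [CompleteSpace E]
    [NormedAddCommGroup F] [InnerProductSpace 𝕜 F]
    {T : E →ₗ.[𝕜] F} (hT : Dense (T.domain : Set E)) {y : F} {w : E}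
    (h : ∀ x : T.domain, ⟪w, x⟫_𝕜 = ⟪y, T x⟫_𝕜) :
    ∃ hy : y ∈ T.adjoint.domain, T.adjoint ⟨y, hy⟩ = w :=
  ⟨mem_adjoint_domain_of_exists y ⟨w, h⟩, adjoint_apply_eq hT _ h⟩

theorem block_form_equality_isometric_general {h K2 : Type*}
    [NormedAddCommGroup h] [InnerProductSpace ℂ h]
    [NormedAddCommGroup K2] [InnerProductSpace ℂ K2] [CompleteSpace K2]
    (D0 : Submodule ℂ h) (Dm : Submodule ℂ K2)
    (hDm : Dense (Dm : Set K2))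
    (K : D0 →ₗ[ℂ] h) (L : D0 →ₗ[ℂ] K2) (M : Dm →ₗ[ℂ] h) (C : Dm →ₗ[ℂ] K2)
    (hform : ∀ (u : D0) (η : Dm),
      2 * (⟪(u : h), K u + M η⟫_ℂ + ⟪(η : K2), L u + C η - (η : K2)⟫_ℂ).re
        + ‖L u + C η - (η : K2)‖ ^ 2 = 0) :
    (∀ η : Dm, ‖C η‖ = ‖(η : K2)‖) ∧
      (∀ u : D0, ‖L u‖ ^ 2 + 2 * (⟪(u : h), K u⟫_ℂ).re = 0) ∧
      ∃ Cbar : K2 →L[ℂ] K2, ‖Cbar‖ ≤ 1 ∧ (∀ η : Dm, Cbar (η : K2) = C η) ∧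
        ∀ u : D0, ∃ hu : (u : h) ∈ (LinearPMap.adjoint (⟨Dm, M⟩ : K2 →ₗ.[ℂ] h)).domain,
          LinearPMap.adjoint (⟨Dm, M⟩ : K2 →ₗ.[ℂ] h) ⟨(u : h), hu⟩ =
            -(ContinuousLinearMap.adjoint Cbar (L u)) := by
  have expand : ∀ u η, (‖L u‖ ^ 2 + 2 * (⟪(u : h), K u⟫_ℂ).re) + (‖C η‖ ^ 2 - ‖(η : K2)‖ ^ 2)
      + 2 * (⟪(u : h), M η⟫_ℂ + ⟪L u, C η⟫_ℂ).re = 0 := fun u η => by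
    have hsum := two_mul_re_inner_add_sub_add_norm_sq (𝕜 := ℂ) (L u) (C η) η
    have := hform u η
    simp only [RCLike.re_to_complex, inner_add_right, Complex.add_re] at hsum this ⊢
    linarith
  have hK : ∀ u : D0, ‖L u‖ ^ 2 + 2 * (⟪(u : h), K u⟫_ℂ).re = 0 := fun u => by
    simpa using expand u 0
  have hC : ∀ η : Dm, ‖C η‖ = ‖(η : K2)‖ := fun η => by
    simpa [sub_eq_zero] using expand 0 η
  have hcross : ∀ (u : D0) (η : Dm), ⟪(u : h), M η⟫_ℂ + ⟪L u, C η⟫_ℂ = 0 := fun u η => by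
    have : (innerₛₗ ℂ (u : h)).comp M + (innerₛₗ ℂ (L u)).comp C = 0 :=
      LinearMap.eq_zero_of_forall_re_apply_eq_zero _ fun η => by
        simpa [hK u, hC η] using expand u η
    simpa using LinearMap.congr_fun this η
  have hdense : DenseRange Dm.subtype := hDm.denseRange_val
  have hbound : ∀ η : Dm, ‖C η‖ ≤ 1 * ‖Dm.subtype η‖ := fun η => by simp [hC η]
  have hext : ∀ η : Dm, C.extendOfNorm Dm.subtype η = C η :=
    LinearMap.extendOfNorm_eq hdense ⟨1, hbound⟩
  refine ⟨hC, hK, C.extendOfNorm Dm.subtype,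
    ContinuousLinearMap.opNorm_le_bound _ zero_le_one
      (LinearMap.norm_extendOfNorm_apply_le hdense 1 hbound), hext, fun u => ?_⟩
  refine LinearPMap.exists_adjoint_apply_eq hDm fun η => ?_
  rw [inner_neg_left, ContinuousLinearMap.adjoint_inner_left, hext η]
  exact (eq_neg_of_add_eq_zero_left (hcross u η)).symm

/-- if `F = [[K, M],[L, C−I]]` satisfies the form *equality*
`2Re⟨ξ, Fξ⟩ + ‖ΔFξ‖² = 0` on `D₀ ⊕ (D ⊗ D_k)`, then `C` is isometric on its domain,
`‖Lu‖² + 2Re⟨u, Ku⟩ = 0` for all `u ∈ D₀`, and `M* ⊃ −C̄*L`, i.e. every `u ∈ D₀` lies in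
`Dom M*` with `M*u = −C̄*(Lu)`, where `C̄` is the contractive continuous extension of `C`. -/
theorem block_form_equality_isometric {h K2 : Type*}
    [NormedAddCommGroup h] [InnerProductSpace ℂ h] [CompleteSpace h]
    [NormedAddCommGroup K2] [InnerProductSpace ℂ K2] [CompleteSpace K2]
    (D0 : Submodule ℂ h) (Dm : Submodule ℂ K2)
    (hD0 : Dense (D0 : Set h)) (hDm : Dense (Dm : Set K2))
    (K : D0 →ₗ[ℂ] h) (L : D0 →ₗ[ℂ] K2) (M : Dm →ₗ[ℂ] h) (C : Dm →ₗ[ℂ] K2)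
    (hform : ∀ (u : D0) (η : Dm),
      2 * (⟪(u : h), K u + M η⟫_ℂ + ⟪(η : K2), L u + C η - (η : K2)⟫_ℂ).re
        + ‖L u + C η - (η : K2)‖ ^ 2 = 0) :
    (∀ η : Dm, ‖C η‖ = ‖(η : K2)‖) ∧
      (∀ u : D0, ‖L u‖ ^ 2 + 2 * (⟪(u : h), K u⟫_ℂ).re = 0) ∧
      ∃ Cbar : K2 →L[ℂ] K2, ‖Cbar‖ ≤ 1 ∧ (∀ η : Dm, Cbar (η : K2) = C η) ∧
        ∀ u : D0, ∃ hu : (u : h) ∈ (LinearPMap.adjoint (⟨Dm, M⟩ : K2 →ₗ.[ℂ] h)).domain,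
          LinearPMap.adjoint (⟨Dm, M⟩ : K2 →ₗ.[ℂ] h) ⟨(u : h), hu⟩ =
            -(ContinuousLinearMap.adjoint Cbar (L u)) :=
  block_form_equality_isometric_general D0 Dm hDm K L M C hform
end

section
/- Let H be a closed symmetric operator on h, L a closed operator h → h⊗k, C a contraction on h⊗k, and set K = iH − ½ L*L on a dense domain D contained in Dom H ∩ Dom L*L ∩ Dom L*C E_d for relevant d. Then the block operator F = [[K, −L*C],[L, C−I]] satisfies 2 Re⟨ξ, Fξ⟩ + ‖ΔFξ‖² ≤ 0 for all ξ = (u, η) with u ∈ D, η ∈ D ⊗_alg D_k, with equality for all such ξ if and only if C is isometric. -/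
open scoped InnerProductSpace

lemma key_alg {HK : Type*} [NormedAddCommGroup HK] [InnerProductSpace ℂ HK]
    (a b c : HK) :
    2 * ((-((2:ℂ)⁻¹ * ⟪a,a⟫_ℂ) - ⟪a,b⟫_ℂ) + ⟪c, a + b - c⟫_ℂ).re + ‖a + b - c‖^2
      = ‖b‖^2 - ‖c‖^2 := by
  have sym : ∀ x y : HK, (⟪x,y⟫_ℂ).re = (⟪y,x⟫_ℂ).re := fun x y => by
    rw [← inner_conj_symm]; exact Complex.conj_re _
  have hn : ∀ x : HK, ‖x‖^2 = (⟪x,x⟫_ℂ).re := fun x => by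
    rw [← inner_self_eq_norm_sq (𝕜:=ℂ)]; rfl
  rw [hn, hn, hn]
  simp only [inner_sub_left, inner_add_left, inner_sub_right, inner_add_right,
    Complex.add_re, Complex.sub_re, Complex.neg_re, Complex.mul_re]
  rw [sym c a, sym c b]
  norm_num
  rw [sym a b]; ring


/-- let `H` be a closed symmetric operator on `h`, `L` a closed operator from
`h` to `HK` (modelling `h ⊗ k`), `C` a contraction on `HK`, `D` a dense subspace of `h`
contained in `Dom H ∩ Dom L*L` and such that `Cη ∈ Dom L*` for all `η` in the dense subspace
`Dm` (modelling `D ⊗ D_k`). With `K = iH − ½L*L` and `M = −L*C`, the block operator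
`F = [[K, M],[L, C−I]]` satisfies `2Re⟨ξ, Fξ⟩ + ‖ΔFξ‖² ≤ 0` for all `ξ = (u, η)` with
`u ∈ D`, `η ∈ Dm`, with equality for all such `ξ` if and only if `C` is isometric. -/
theorem HP_generator_form_inequality {h HK : Type*}
    [NormedAddCommGroup h] [InnerProductSpace ℂ h] [CompleteSpace h]
    [NormedAddCommGroup HK] [InnerProductSpace ℂ HK] [CompleteSpace HK]
    (D : Submodule ℂ h) (hD : Dense (D : Set h))
    (Dm : Submodule ℂ HK) (hDm : Dense (Dm : Set HK))
    (H : h →ₗ.[ℂ] h) (hHclosed : H.IsClosed)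
    (hHsym : ∀ u v : H.domain, ⟪H u, (v : h)⟫_ℂ = ⟪(u : h), H v⟫_ℂ)
    (L : h →ₗ.[ℂ] HK) (hLclosed : L.IsClosed) (hLdense : Dense (L.domain : Set h))
    (C : HK →L[ℂ] HK) (hC : ‖C‖ ≤ 1)
    (hDH : D ≤ H.domain) (hDL : D ≤ L.domain)
    (hDLL : ∀ u (hu : u ∈ D), L ⟨u, hDL hu⟩ ∈ (LinearPMap.adjoint L).domain)
    (hCDm : ∀ η (hη : η ∈ Dm), C η ∈ (LinearPMap.adjoint L).domain) :
    (∀ u (hu : u ∈ D) (η) (hη : η ∈ Dm),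
      2 * (⟪u, (Complex.I • H ⟨u, hDH hu⟩
              - (2 : ℂ)⁻¹ • LinearPMap.adjoint L ⟨L ⟨u, hDL hu⟩, hDLL u hu⟩)
            + -(LinearPMap.adjoint L ⟨C η, hCDm η hη⟩)⟫_ℂ
          + ⟪η, L ⟨u, hDL hu⟩ + C η - η⟫_ℂ).re
        + ‖L ⟨u, hDL hu⟩ + C η - η‖ ^ 2 ≤ 0) ∧
    ((∀ u (hu : u ∈ D) (η) (hη : η ∈ Dm),
      2 * (⟪u, (Complex.I • H ⟨u, hDH hu⟩
              - (2 : ℂ)⁻¹ • LinearPMap.adjoint L ⟨L ⟨u, hDL hu⟩, hDLL u hu⟩)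
            + -(LinearPMap.adjoint L ⟨C η, hCDm η hη⟩)⟫_ℂ
          + ⟪η, L ⟨u, hDL hu⟩ + C η - η⟫_ℂ).re
        + ‖L ⟨u, hDL hu⟩ + C η - η‖ ^ 2 = 0) ↔
      ∀ ξ : HK, ‖C ξ‖ = ‖ξ‖) := by
  have hadj := LinearPMap.adjoint_isFormalAdjoint hLdense
  -- the main computation: the expression equals ‖Cη‖² - ‖η‖²
  have main : ∀ u (hu : u ∈ D) (η) (hη : η ∈ Dm),
      2 * (⟪u, (Complex.I • H ⟨u, hDH hu⟩
              - (2 : ℂ)⁻¹ • LinearPMap.adjoint L ⟨L ⟨u, hDL hu⟩, hDLL u hu⟩)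
            + -(LinearPMap.adjoint L ⟨C η, hCDm η hη⟩)⟫_ℂ
          + ⟪η, L ⟨u, hDL hu⟩ + C η - η⟫_ℂ).re
        + ‖L ⟨u, hDL hu⟩ + C η - η‖ ^ 2 = ‖C η‖^2 - ‖η‖^2 := by
    intro u hu η hη
    set a : HK := L ⟨u, hDL hu⟩ with ha
    have h2 : ⟪u, LinearPMap.adjoint L ⟨a, hDLL u hu⟩⟫_ℂ = ⟪a, a⟫_ℂ := by
      rw [← inner_conj_symm]
      rw [hadj ⟨a, hDLL u hu⟩ ⟨u, hDL hu⟩]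
      exact inner_conj_symm a a
    have h3 : ⟪u, LinearPMap.adjoint L ⟨C η, hCDm η hη⟩⟫_ℂ = ⟪a, C η⟫_ℂ := by
      rw [← inner_conj_symm]
      rw [hadj ⟨C η, hCDm η hη⟩ ⟨u, hDL hu⟩]
      exact inner_conj_symm a (C η)
    have h4 : (⟪u, Complex.I • H ⟨u, hDH hu⟩⟫_ℂ).re = 0 := by
      rw [inner_smul_right]
      have ht : (starRingEnd ℂ) ⟪u, H ⟨u, hDH hu⟩⟫_ℂ = ⟪u, H ⟨u, hDH hu⟩⟫_ℂ := by
        rw [inner_conj_symm]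
        exact hHsym ⟨u, hDH hu⟩ ⟨u, hDH hu⟩
      have him : (⟪u, H ⟨u, hDH hu⟩⟫_ℂ).im = 0 := by
        have := congrArg Complex.im ht
        simp only [Complex.conj_im] at this
        linarith
      simp [Complex.mul_re, him]
    rw [inner_add_right, inner_sub_right, inner_smul_right, inner_neg_right,
      inner_smul_right (𝕜 := ℂ) u (LinearPMap.adjoint L ⟨a, hDLL u hu⟩) ((2:ℂ)⁻¹), h2, h3]
    have := key_alg a (C η) η
    rw [← this]
    congr 1
    simp only [← ha]
    rw [inner_smul_right] at h4
    simp only [Complex.add_re, Complex.sub_re, Complex.neg_re]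
    rw [h4]
    ring
  have hle : ∀ η : HK, ‖C η‖ ≤ ‖η‖ := fun η => by
    calc ‖C η‖ ≤ ‖C‖ * ‖η‖ := C.le_opNorm η
    _ ≤ 1 * ‖η‖ := mul_le_mul_of_nonneg_right hC (norm_nonneg η)
    _ = ‖η‖ := one_mul _
  constructor
  · intro u hu η hη
    rw [main u hu η hη]
    have := hle η
    have h1 : ‖C η‖^2 ≤ ‖η‖^2 := by nlinarith [norm_nonneg (C η)]
    linarith
  · constructor
    · intro hEq ξ
      have hsub : (Dm : Set HK) ⊆ {x : HK | ‖C x‖ = ‖x‖} := by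
        intro η hη
        have h0 := hEq 0 D.zero_mem η hη
        rw [main 0 D.zero_mem η hη] at h0
        have hsq : ‖C η‖^2 = ‖η‖^2 := by linarith
        have hge : ‖η‖ ≤ ‖C η‖ := by nlinarith [norm_nonneg (C η), norm_nonneg η, hle η]
        exact le_antisymm (hle η) hge
      have hclosed : IsClosed {x : HK | ‖C x‖ = ‖x‖} :=
        isClosed_eq (C.continuous.norm) continuous_norm
      have : closure (Dm : Set HK) ⊆ {x : HK | ‖C x‖ = ‖x‖} :=
        hclosed.closure_subset_iff.mpr hsub
      rw [hDm.closure_eq] at this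
      exact this (Set.mem_univ ξ)
    · intro hIso u hu η hη
      rw [main u hu η hη, hIso η]
      ring
end
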